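/- Let p be a prime, f : ℕ → ℕ, and r an integer with r ≥ 1. Then binom(p·r, p)_f ≡ binom(p,p)_f · f(0)^{p·(r−1)} · r (mod p²). -/

import Mathlib

/-!
Since `binom(k,n)_f` is the `n`-th coefficient of `F ^ k` for `F = ∑ f(i) Xⁱ`, writing
`F ^ (p r) = (F ^ p) ^ r` expresses `binom(p r, p)_f` as a sum over compositions `(m₁, …, m_r)`
of `p` of the products `∏ binom(p, m_j)_f`. Modulo `p`, `F ^ p` only has monomials in `Xᵖ`,
so `p ∣ binom(p, m)_f` for `0 < m < p`. Every composition of `p` other than the `r` ones with a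
single nonzero part `p` has two parts strictly between `0` and `p`, so its term vanishes
modulo `p²`; the `r` remaining terms each equal `binom(p,p)_f · f(0)^{p(r-1)}`.
-/

/-- The extended binomial coefficient `binom(k,n)_f`: the sum, over all
`k`-tuples `(π₁,…,π_k)` of nonnegative integers with `π₁ + ⋯ + π_k = n`,
of the products `f(π₁)⋯f(π_k)`. It counts the `f`-weighted integer
compositions of `n` with exactly `k` parts. -/
def extBinom (f : ℕ → ℕ) (k n : ℕ) : ℕ :=
  ∑ π ∈ Finset.Nat.antidiagonalTuple k n, ∏ i, f (π i)

open Finset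

namespace PowerSeries

theorem coeff_pow_eq_sum_antidiagonalTuple {R : Type*} [CommSemiring R] (φ : R⟦X⟧)
    (k n : ℕ) :
    coeff n (φ ^ k) = ∑ l ∈ Nat.antidiagonalTuple k n, ∏ i, coeff (l i) φ := by
  induction k generalizing n with
  | zero => cases n <;> simp [coeff_one, Nat.antidiagonalTuple_zero_right]
  | succ k ih =>
    rw [pow_succ', coeff_mul]
    simp_rw [ih, mul_sum]
    rw [sum_sigma']
    refine sum_nbij' (fun x => Fin.cons x.1.1 x.2)
      (fun l => ⟨(l 0, ∑ i, Fin.tail l i), Fin.tail l⟩) ?_ ?_ ?_ ?_ ?_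
    · rintro ⟨⟨a, b⟩, l⟩ hx
      simp only [mem_sigma, HasAntidiagonal.mem_antidiagonal, Nat.mem_antidiagonalTuple] at hx ⊢
      rw [Fin.sum_cons, hx.2, hx.1]
    · intro l hl
      simp only [mem_sigma, HasAntidiagonal.mem_antidiagonal, Nat.mem_antidiagonalTuple] at hl ⊢
      exact ⟨by rw [← hl, Fin.sum_univ_succ]; rfl, trivial⟩
    · rintro ⟨⟨a, b⟩, l⟩ hx
      simp only [mem_sigma, Nat.mem_antidiagonalTuple] at hx
      simp [Fin.tail_cons, hx.2]
    · intro l _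
      simp
    · rintro ⟨⟨a, b⟩, l⟩ _
      simp [Fin.prod_univ_succ]

theorem coeff_pow_eq_zero_of_not_dvd {R : Type*} [CommRing R] (p : ℕ) [ExpChar R p]
    (φ : R⟦X⟧) {n : ℕ} (hn : ¬ p ∣ n) : coeff n (φ ^ p) = 0 := by
  rw [← MvPowerSeries.map_frobenius_expand p (expChar_ne_zero R p)]
  change (frobenius R p) (coeff n (expand p (expChar_ne_zero R p) φ)) = 0
  rw [coeff_expand_of_not_dvd p _ φ hn, map_zero]

end PowerSeries

theorem extBinom_eq_coeff_pow (f : ℕ → ℕ) (k n : ℕ) :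
    extBinom f k n = PowerSeries.coeff n (PowerSeries.mk f ^ k) := by
  simp [extBinom, PowerSeries.coeff_pow_eq_sum_antidiagonalTuple]

theorem extBinom_zero_right (f : ℕ → ℕ) (k : ℕ) : extBinom f k 0 = f 0 ^ k := by
  simp [extBinom, Nat.antidiagonalTuple_zero_right]

theorem extBinom_mul (f : ℕ → ℕ) (k r n : ℕ) :
    extBinom f (k * r) n = ∑ l ∈ Nat.antidiagonalTuple r n, ∏ j, extBinom f k (l j) := by
  simp only [extBinom_eq_coeff_pow, pow_mul, PowerSeries.coeff_pow_eq_sum_antidiagonalTuple]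

theorem Nat.Prime.dvd_extBinom {p : ℕ} (hp : p.Prime) (f : ℕ → ℕ) {n : ℕ} (hn₀ : 0 < n)
    (hnp : n < p) : p ∣ extBinom f p n := by
  have : Fact p.Prime := ⟨hp⟩
  rw [← ZMod.natCast_eq_zero_iff, extBinom_eq_coeff_pow, ← Nat.coe_castRingHom,
    ← PowerSeries.coeff_map, map_pow]
  exact PowerSeries.coeff_pow_eq_zero_of_not_dvd p _ (Nat.not_dvd_of_pos_of_lt hn₀ hnp)

namespace Finset.Nat

variable {k n : ℕ} {l : Fin k → ℕ}

theorem le_of_mem_antidiagonalTuple (hl : l ∈ antidiagonalTuple k n) (i : Fin k) : l i ≤ n :=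
  mem_antidiagonalTuple.1 hl ▸ single_le_sum (fun _ _ => Nat.zero_le _) (mem_univ i)

theorem eq_single_of_mem_antidiagonalTuple (hl : l ∈ antidiagonalTuple k n) {j : Fin k}
    (hj : l j = n) : l = Pi.single j n := by
  rw [mem_antidiagonalTuple, ← add_sum_erase _ _ (mem_univ j), hj, Nat.add_eq_left,
    sum_eq_zero_iff] at hl
  ext i
  rcases eq_or_ne i j with rfl | hij
  · simp [hj]
  · simp [hij, hl i (by simp [hij])]

theorem exists_ne_ne_zero_of_mem_antidiagonalTuple (hl : l ∈ antidiagonalTuple k n) (hn : 0 < n)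
    (hlt : ∀ j, l j < n) : ∃ i j, i ≠ j ∧ l i ≠ 0 ∧ l j ≠ 0 := by
  rw [mem_antidiagonalTuple] at hl
  obtain ⟨i, -, hi⟩ := exists_ne_zero_of_sum_ne_zero (s := univ) (f := l) (by omega)
  by_contra! h
  have : ∑ x, l x = l i := sum_eq_single i (fun j _ hji => h i j hji.symm hi) (by simp)
  exact (hlt i).ne (this ▸ hl)

end Finset.Nat

theorem sq_dvd_prod_of_dvd_of_dvd {ι M : Type*} [Fintype ι] [CommMonoid M] {p : M} {g : ι → M}
    {i j : ι} (hij : i ≠ j) (hi : p ∣ g i) (hj : p ∣ g j) : p ^ 2 ∣ ∏ x, g x := by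
  classical
  calc p ^ 2 ∣ g i * g j := by rw [sq]; exact mul_dvd_mul hi hj
    _ = ∏ x ∈ {i, j}, g x := (prod_pair hij).symm
    _ ∣ ∏ x, g x := prod_dvd_prod_of_subset _ _ _ (subset_univ _)

theorem prod_apply_pi_single {r : ℕ} {M : Type*} [CommMonoid M] (g : ℕ → M) (j : Fin r)
    (n : ℕ) :
    ∏ i, g ((Pi.single j n : Fin r → ℕ) i) = g n * g 0 ^ (r - 1) := by
  rw [Fintype.prod_eq_mul_prod_compl j, Pi.single_eq_same,
    prod_congr rfl fun i hi => by rw [Pi.single_eq_of_ne (mem_compl.1 hi ∘ mem_singleton.2)]]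
  simp [card_compl]

theorem sum_antidiagonalTuple_prod_modEq {p : ℕ} (hp : 0 < p) (g : ℕ → ℕ)
    (hg : ∀ m, 0 < m → m < p → p ∣ g m) (r : ℕ) :
    ∑ l ∈ Nat.antidiagonalTuple r p, ∏ j, g (l j) ≡
      g p * g 0 ^ (r - 1) * r [MOD p ^ 2] := by
  classical
  set S := Nat.antidiagonalTuple r p
  set T := univ.image fun j : Fin r => (Pi.single j p : Fin r → ℕ)
  have hTS : T ⊆ S := by
    simp [T, S, subset_iff, Nat.mem_antidiagonalTuple]
  have hT : ∑ l ∈ T, ∏ j, g (l j) = g p * g 0 ^ (r - 1) * r := by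
    rw [sum_image fun i _ j _ hij => by_contra fun h => hp.ne' (by simpa [h] using congrFun hij i)]
    simp [prod_apply_pi_single, mul_comm]
  have hrest : p ^ 2 ∣ ∑ l ∈ S \ T, ∏ j, g (l j) := by
    refine dvd_sum fun l hl => ?_
    obtain ⟨hlS, hlT⟩ := mem_sdiff.1 hl
    have hlt : ∀ j, l j < p := fun j => (Nat.le_of_mem_antidiagonalTuple hlS j).lt_of_ne fun h =>
      hlT (mem_image.2 ⟨j, mem_univ _, (Nat.eq_single_of_mem_antidiagonalTuple hlS h).symm⟩)
    obtain ⟨i, j, hij, hi, hj⟩ := Nat.exists_ne_ne_zero_of_mem_antidiagonalTuple hlS hp hlt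
    exact sq_dvd_prod_of_dvd_of_dvd hij (hg _ (Nat.pos_of_ne_zero hi) (hlt i))
      (hg _ (Nat.pos_of_ne_zero hj) (hlt j))
  rw [← sum_sdiff hTS, ← hT]
  simpa using (Nat.modEq_zero_iff_dvd.2 hrest).add_right (∑ l ∈ T, ∏ j, g (l j))

theorem extBinom_babbage_corollary_general (p : ℕ) (hp : p.Prime) (f : ℕ → ℕ)
    (r : ℕ) :
    extBinom f (p * r) p ≡
      extBinom f p p * f 0 ^ (p * (r - 1)) * r [MOD p ^ 2] := by
  have h := sum_antidiagonalTuple_prod_modEq hp.pos (extBinom f p)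
    (fun _ => hp.dvd_extBinom f) r
  rwa [extBinom_zero_right, ← pow_mul, ← extBinom_mul] at h

theorem extBinom_babbage_corollary (p : ℕ) (hp : p.Prime) (f : ℕ → ℕ)
    (r : ℕ) (hr : 1 ≤ r) :
    extBinom f (p * r) p ≡
      extBinom f p p * f 0 ^ (p * (r - 1)) * r [MOD p ^ 2] :=
  extBinom_babbage_corollary_general p hp f r
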